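/- arXiv:2404.03281 — 4 statements merged into one kernel-verified Lean document; each statement's English description precedes it below -/
import Mathlib

section
/- Numerical classification underlying the classification of Sarkisov links of type II between del Pezzo surfaces of Picard rank 1: Let K, a, b, m be integers with K ∈ {2,3,4,5,6,8,9}, 1 ≤ a ≤ K − 1, 1 ≤ b, K − a + b ≤ 9, and m ≥ 1. Then a(a−K)m² + 2abm + b(b+K) = 0 holds if and only if (K,a,b,m) is one of the following 28 tuples: (9,2,1,1), (9,3,3,2), (9,5,1,1), (9,6,6,5), (9,7,7,8), (9,8,8,17), (8,1,2,2), (8,3,1,1), (8,4,4,3), (8,5,2,2), (8,6,6,7), (8,7,7,15), (6,1,3,3), (6,2,2,2), (6,3,3,3), (6,4,4,5), (6,5,5,11), (5,1,5,5), (5,2,5,5), (5,3,3,4), (5,4,4,9), (4,2,2,3), (4,3,3,7), (3,1,1,2), (3,2,2,5), (3,1,6,9), (2,1,1,3), (2,1,8,20). -/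
/-!
Since `b (b + K) ≤ b (b + K) m` for `m ≥ 1`, the equation
`a (K − a) m² = 2 a b m + b (b + K)` forces `a (K − a) m ≤ b (2 a + b + K)`.
Together with `a < K` and `b ≤ 9 − K + a` this confines `(K, a, b, m)` to a finite box,
which is searched exhaustively.
-/

def linkIISolutions : Set (ℤ × ℤ × ℤ × ℤ) :=
  {(9, 2, 1, 1), (9, 3, 3, 2), (9, 5, 1, 1), (9, 6, 6, 5), (9, 7, 7, 8),
    (9, 8, 8, 17), (8, 1, 2, 2), (8, 3, 1, 1), (8, 4, 4, 3), (8, 5, 2, 2), (8, 6, 6, 7),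
    (8, 7, 7, 15), (6, 1, 3, 3), (6, 2, 2, 2), (6, 3, 3, 3), (6, 4, 4, 5), (6, 5, 5, 11),
    (5, 1, 5, 5), (5, 2, 5, 5), (5, 3, 3, 4), (5, 4, 4, 9), (4, 2, 2, 3), (4, 3, 3, 7),
    (3, 1, 1, 2), (3, 2, 2, 5), (3, 1, 6, 9), (2, 1, 1, 3), (2, 1, 8, 20)}

lemma linkII_mul_le_of_eq {K a b m : ℤ} (hK : 0 ≤ K) (hb : 0 ≤ b) (hm : 1 ≤ m)
    (h : a * (a - K) * m ^ 2 + 2 * a * b * m + b * (b + K) = 0) :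
    a * (K - a) * m ≤ b * (2 * a + b + K) := by
  have hbK : b * (b + K) ≤ b * (b + K) * m :=
    le_mul_of_one_le_right (mul_nonneg hb (add_nonneg hb hK)) hm
  refine le_of_mul_le_mul_right ?_ (zero_lt_one.trans_le hm)
  linear_combination hbK - h

lemma linkII_eq_of_mem_solutions {K a b m : ℤ} (h : (K, a, b, m) ∈ linkIISolutions) :
    a * (a - K) * m ^ 2 + 2 * a * b * m + b * (b + K) = 0 := by
  simp only [linkIISolutions, Set.mem_insert_iff, Set.mem_singleton_iff, Prod.mk.injEq] at h
  aesop

lemma mem_linkIISolutions_of_eq {K a b m : ℤ}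
    (hK : K = 2 ∨ K = 3 ∨ K = 4 ∨ K = 5 ∨ K = 6 ∨ K = 8 ∨ K = 9)
    (ha₁ : 1 ≤ a) (ha₂ : a ≤ K - 1) (hb : 1 ≤ b) (hdeg : K - a + b ≤ 9) (hm : 1 ≤ m)
    (hbound : a * (K - a) * m ≤ b * (2 * a + b + K))
    (h : a * (a - K) * m ^ 2 + 2 * a * b * m + b * (b + K) = 0) :
    (K, a, b, m) ∈ linkIISolutions := by
  have hb₂ : b ≤ 9 - K + a := by omega
  have hm₂ : m ≤ b * (2 * a + b + K) / (a * (K - a)) :=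
    (Int.le_ediv_iff_mul_le (by nlinarith)).2 (by linarith)
  simp only [linkIISolutions, Set.mem_insert_iff, Set.mem_singleton_iff, Prod.mk.injEq]
  rcases hK with rfl | rfl | rfl | rfl | rfl | rfl | rfl <;>
    interval_cases a <;> interval_cases b <;> norm_num at hm₂ h ⊢ <;>
    interval_cases m <;> omega

/-- Numerical classification underlying the classification of Sarkisov links of type II between
del Pezzo surfaces of Picard rank 1: for integers `K ∈ {2,3,4,5,6,8,9}`, `1 ≤ a ≤ K − 1`,
`1 ≤ b`, `K − a + b ≤ 9` and `m ≥ 1`, the equation `a(a−K)m² + 2abm + b(b+K) = 0` holds exactly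
for the 28 listed tuples `(K,a,b,m)`. -/
theorem sarkisov_linkII_numerical_classification (K a b m : ℤ)
    (hK : K = 2 ∨ K = 3 ∨ K = 4 ∨ K = 5 ∨ K = 6 ∨ K = 8 ∨ K = 9)
    (ha₁ : 1 ≤ a) (ha₂ : a ≤ K - 1) (hb : 1 ≤ b) (hdeg : K - a + b ≤ 9) (hm : 1 ≤ m) :
    a * (a - K) * m ^ 2 + 2 * a * b * m + b * (b + K) = 0 ↔
      (K, a, b, m) ∈ ({(9, 2, 1, 1), (9, 3, 3, 2), (9, 5, 1, 1), (9, 6, 6, 5), (9, 7, 7, 8),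
        (9, 8, 8, 17), (8, 1, 2, 2), (8, 3, 1, 1), (8, 4, 4, 3), (8, 5, 2, 2), (8, 6, 6, 7),
        (8, 7, 7, 15), (6, 1, 3, 3), (6, 2, 2, 2), (6, 3, 3, 3), (6, 4, 4, 5), (6, 5, 5, 11),
        (5, 1, 5, 5), (5, 2, 5, 5), (5, 3, 3, 4), (5, 4, 4, 9), (4, 2, 2, 3), (4, 3, 3, 7),
        (3, 1, 1, 2), (3, 2, 2, 5), (3, 1, 6, 9), (2, 1, 1, 3), (2, 1, 8, 20)} :
        Set (ℤ × ℤ × ℤ × ℤ)) := by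
  change _ ↔ (K, a, b, m) ∈ linkIISolutions
  refine ⟨fun h => ?_, linkII_eq_of_mem_solutions⟩
  have hbound := linkII_mul_le_of_eq (by omega) (by omega) hm h
  exact mem_linkIISolutions_of_eq hK ha₁ ha₂ hb hdeg hm hbound h
end

section
/- Let k be a field and p a prime number, and let m ⊆ k[X,Y] be a maximal ideal such that dim_k k[X,Y]/m = p. Then, possibly after applying the k-algebra automorphism of k[X,Y] that exchanges X and Y, there exist an irreducible polynomial g ∈ k[X] of degree p and polynomials b, f ∈ k[X] of degree at most p − 1 such that m is generated by g and bY − f. Moreover, if k has characteristic p and the residue field k[X,Y]/m is a purely inseparable extension of k, then g can be taken of the form X^p − t for some t ∈ k with t ∉ k^p. -/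
open Polynomial MvPolynomial Ideal

set_option maxHeartbeats 1000000 in
set_option synthInstance.maxHeartbeats 400000 in
lemma aux_span {k : Type*} [Field k] (p : ℕ) (hp : p.Prime)
    (m : Ideal (MvPolynomial (Fin 2) k)) (hm : m.IsMaximal)
    (hdeg : Module.finrank k (MvPolynomial (Fin 2) k ⧸ m) = p)
    (hx : Ideal.Quotient.mk m (MvPolynomial.X 0) ∉
      Set.range (algebraMap k (MvPolynomial (Fin 2) k ⧸ m))) :
    (minpoly k (Ideal.Quotient.mk m (MvPolynomial.X 0))).natDegree = p ∧
    Irreducible (minpoly k (Ideal.Quotient.mk m (MvPolynomial.X 0))) ∧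
    ∃ f : Polynomial k, f.natDegree ≤ p - 1 ∧
      m = Ideal.span {Polynomial.aeval (MvPolynomial.X 0 : MvPolynomial (Fin 2) k)
          (minpoly k (Ideal.Quotient.mk m (MvPolynomial.X 0))),
        MvPolynomial.X 1 - Polynomial.aeval (MvPolynomial.X 0 : MvPolynomial (Fin 2) k) f} := by
  letI : Field (MvPolynomial (Fin 2) k ⧸ m) := Ideal.Quotient.field m
  haveI : Module.Finite k (MvPolynomial (Fin 2) k ⧸ m) :=
    Module.finite_of_finrank_pos (by rw [hdeg]; exact hp.pos)
  set x : MvPolynomial (Fin 2) k ⧸ m := Ideal.Quotient.mk m (MvPolynomial.X 0) with hxdef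
  set y : MvPolynomial (Fin 2) k ⧸ m := Ideal.Quotient.mk m (MvPolynomial.X 1) with hydef
  have hxi : IsIntegral k x := IsIntegral.of_finite k x
  -- degree of minpoly is p
  have hd1 : Module.finrank k (IntermediateField.adjoin k {x}) = (minpoly k x).natDegree :=
    IntermediateField.adjoin.finrank hxi
  have htower := Module.finrank_mul_finrank k (IntermediateField.adjoin k {x})
    (MvPolynomial (Fin 2) k ⧸ m)
  rw [hdeg] at htower
  have hne1 : Module.finrank k (IntermediateField.adjoin k {x}) ≠ 1 := by
    intro h1
    rw [IntermediateField.finrank_eq_one_iff] at h1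
    apply hx
    have hxx : x ∈ IntermediateField.adjoin k {x} := IntermediateField.mem_adjoin_simple_self k x
    rw [h1, IntermediateField.mem_bot] at hxx
    exact hxx
  have hdp : Module.finrank k (IntermediateField.adjoin k {x}) = p := by
    rcases (hp.eq_one_or_self_of_dvd _ (Dvd.intro _ htower)) with h | h
    · exact absurd h hne1
    · exact h
  have hmindeg : (minpoly k x).natDegree = p := by rw [← hd1, hdp]
  have hirr : Irreducible (minpoly k x) := minpoly.irreducible hxi
  -- adjoin x = ⊤
  have hadj : IntermediateField.adjoin k {x} = ⊤ :=
    IntermediateField.eq_of_le_of_finrank_le le_top (by rw [hdp, IntermediateField.finrank_top', hdeg])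
  have hy : y ∈ (IntermediateField.adjoin k {x}).toSubalgebra := by
    rw [hadj]; trivial
  rw [IntermediateField.adjoin_simple_toSubalgebra_of_isAlgebraic hxi.isAlgebraic,
    Algebra.adjoin_singleton_eq_range_aeval] at hy
  obtain ⟨q, hq⟩ := hy
  -- replace q by its reduction mod the minimal polynomial
  have hmon : (minpoly k x).Monic := minpoly.monic hxi
  have hmne1 : minpoly k x ≠ 1 := by
    intro h1
    rw [h1] at hmindeg
    simp at hmindeg
    exact hp.ne_zero hmindeg.symm
  set f : Polynomial k := q %ₘ minpoly k x with hfdef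
  have hfx : Polynomial.aeval x f = y := by
    rw [hfdef, aeval_modByMonic_eq_self_of_root (minpoly.aeval k x)]
    exact hq
  have hfdeg : f.natDegree ≤ p - 1 := by
    have h2 := Polynomial.natDegree_modByMonic_lt q hmon hmne1
    rw [hmindeg] at h2
    have h3 := hp.pos
    rw [hfdef]
    omega
  refine ⟨hmindeg, hirr, f, hfdeg, ?_⟩
  -- ideal equality
  set g : Polynomial k := minpoly k x with hgdef
  set G : MvPolynomial (Fin 2) k := Polynomial.aeval (MvPolynomial.X 0) g with hGdef
  set F : MvPolynomial (Fin 2) k := Polynomial.aeval (MvPolynomial.X 0) f with hFdef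
  have hGm : G ∈ m := by
    rw [← Ideal.Quotient.eq_zero_iff_mem]
    have : Ideal.Quotient.mk m G = Polynomial.aeval x g :=
      (Polynomial.aeval_algHom_apply (Ideal.Quotient.mkₐ k m) (MvPolynomial.X 0) g).symm
    rw [this, hgdef]
    exact minpoly.aeval k x
  have hYFm : MvPolynomial.X 1 - F ∈ m := by
    rw [← Ideal.Quotient.eq_zero_iff_mem]
    have h1 : Ideal.Quotient.mk m F = Polynomial.aeval x f :=
      (Polynomial.aeval_algHom_apply (Ideal.Quotient.mkₐ k m) (MvPolynomial.X 0) f).symm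
    rw [map_sub, h1, hfx]
    exact sub_self y
  apply le_antisymm
  · -- hard direction: m ≤ span
    intro P hP
    -- the substitution homs
    set ψ : MvPolynomial (Fin 2) k →ₐ[k] Polynomial k :=
      MvPolynomial.aeval ![Polynomial.X, f] with hψdef
    set σ : MvPolynomial (Fin 2) k →ₐ[k] MvPolynomial (Fin 2) k :=
      (Polynomial.aeval (MvPolynomial.X 0 : MvPolynomial (Fin 2) k)).comp ψ with hσdef
    have key : ∀ Q : MvPolynomial (Fin 2) k,
        Q - σ Q ∈ Ideal.span {MvPolynomial.X 1 - F} := by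
      intro Q
      have : (Ideal.Quotient.mkₐ k (Ideal.span {MvPolynomial.X 1 - F})).comp σ =
          Ideal.Quotient.mkₐ k (Ideal.span {MvPolynomial.X 1 - F}) := by
        apply MvPolynomial.algHom_ext
        intro i
        fin_cases i
        · simp [hσdef, hψdef]
        · have hmem : MvPolynomial.X 1 - F ∈ Ideal.span {MvPolynomial.X 1 - F} :=
            Ideal.subset_span rfl
          simp only [AlgHom.comp_apply, hσdef, hψdef, MvPolynomial.aeval_X,
            Matrix.cons_val_one, Matrix.head_cons, Ideal.Quotient.mkₐ_eq_mk]
          rw [Ideal.Quotient.mk_eq_mk_iff_sub_mem]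
          have h4 := (Ideal.span {MvPolynomial.X (1 : Fin 2) - F}).neg_mem hmem
          rw [neg_sub] at h4
          exact h4
      have h2 := congrArg (fun φ => φ Q) this
      simp only [AlgHom.comp_apply, Ideal.Quotient.mkₐ_eq_mk] at h2
      rw [← Ideal.Quotient.mk_eq_mk_iff_sub_mem]
      exact h2.symm
    have hσP : σ P ∈ m := by
      have h1 : P - σ P ∈ m := by
        apply Ideal.span_le.mpr ?_ (key P)
        intro z hz
        rw [Set.mem_singleton_iff] at hz
        rw [hz]; exact hYFm
      have h2 := m.sub_mem hP h1
      rwa [sub_sub_cancel] at h2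
    have hdvd : g ∣ ψ P := by
      rw [hgdef]
      apply minpoly.dvd
      have : Ideal.Quotient.mk m (σ P) = Polynomial.aeval x (ψ P) :=
        (Polynomial.aeval_algHom_apply (Ideal.Quotient.mkₐ k m) (MvPolynomial.X 0) (ψ P)).symm
      rw [← this]
      exact Ideal.Quotient.eq_zero_iff_mem.mpr hσP
    obtain ⟨r, hr⟩ := hdvd
    have hσPspan : σ P ∈ Ideal.span {G, MvPolynomial.X 1 - F} := by
      have : σ P = G * Polynomial.aeval (MvPolynomial.X 0 : MvPolynomial (Fin 2) k) r := by
        rw [hσdef, AlgHom.comp_apply, hr, _root_.map_mul, hGdef]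
      rw [this]
      exact Ideal.mul_mem_right _ _ (Ideal.subset_span (Set.mem_insert _ _))
    have hPspan : P - σ P ∈ Ideal.span {G, MvPolynomial.X 1 - F} := by
      apply Ideal.span_mono ?_ (key P)
      intro z hz
      rw [Set.mem_singleton_iff] at hz
      rw [hz]
      exact Set.mem_insert_iff.mpr (Or.inr rfl)
    simpa using Ideal.add_mem _ hPspan hσPspan
  · rw [Ideal.span_le]
    intro z hz
    rcases hz with hz | hz
    · rw [hz]; exact hGm
    · rw [Set.mem_singleton_iff] at hz
      rw [hz]; exact hYFm

set_option maxHeartbeats 1000000 in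
set_option synthInstance.maxHeartbeats 400000 in
lemma aux_insep {k : Type*} [Field k] {K : Type*} [Field K] [Algebra k K]
    (p : ℕ) (hp : p.Prime) (hchar : CharP k p) (x : K)
    (hx : x ∉ Set.range (algebraMap k K)) (hxi : IsIntegral k x)
    (hmindeg : (minpoly k x).natDegree = p)
    (hinsep : ∃ (e : ℕ) (a : k), x ^ p ^ e = algebraMap k K a) :
    ∃ t : k, (∀ a : k, a ^ p ≠ t) ∧ minpoly k x = Polynomial.X ^ p - Polynomial.C t := by
  haveI := Fact.mk hp
  haveI : CharP K p := charP_of_injective_algebraMap (algebraMap k K).injective p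
  haveI : ExpChar K p := ExpChar.prime (Fact.out)
  obtain ⟨e, a, hea⟩ := hinsep
  have hmapinj : Function.Injective (Polynomial.map (algebraMap k K)) :=
    Polynomial.map_injective _ (algebraMap k K).injective
  have hdvd : minpoly k x ∣ Polynomial.X ^ (p ^ e) - Polynomial.C a := by
    apply minpoly.dvd
    simp only [map_sub, map_pow, Polynomial.aeval_X, Polynomial.aeval_C]
    rw [hea, sub_self]
  have hdvd2 : (minpoly k x).map (algebraMap k K) ∣
      (Polynomial.X - Polynomial.C x) ^ (p ^ e) := by
    have := Polynomial.map_dvd (algebraMap k K) hdvd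
    rw [Polynomial.map_sub, Polynomial.map_pow, Polynomial.map_X, Polynomial.map_C] at this
    rw [sub_pow_char_pow, ← Polynomial.C_pow, hea]
    exact this
  obtain ⟨i, hi, hassoc⟩ := (dvd_prime_pow (Polynomial.prime_X_sub_C x) (p ^ e)).mp hdvd2
  have heq : (minpoly k x).map (algebraMap k K) = (Polynomial.X - Polynomial.C x) ^ i :=
    Polynomial.eq_of_monic_of_associated ((minpoly.monic hxi).map _)
      ((Polynomial.monic_X_sub_C x).pow i) hassoc
  have hip : i = p := by
    have h1 := congrArg Polynomial.natDegree heq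
    rw [Polynomial.natDegree_map, hmindeg, Polynomial.natDegree_pow,
      Polynomial.natDegree_X_sub_C, mul_one] at h1
    exact h1.symm
  rw [hip] at heq
  have heq2 : (minpoly k x).map (algebraMap k K) =
      Polynomial.X ^ p - Polynomial.C (x ^ p) := by
    rw [heq, sub_pow_char, Polynomial.C_pow]
  refine ⟨-(minpoly k x).coeff 0, ?_, ?_⟩
  · -- t ∉ k^p
    have hc0 : algebraMap k K (-(minpoly k x).coeff 0) = x ^ p := by
      have := congrArg (fun q => Polynomial.coeff q 0) heq2
      simp only [Polynomial.coeff_map, Polynomial.coeff_sub, Polynomial.coeff_C_zero,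
        Polynomial.coeff_X_pow] at this
      rw [if_neg (Nat.ne_of_lt hp.pos)] at this
      rw [map_neg, this]
      ring
    intro a0 ha0
    apply hx
    refine ⟨a0, ?_⟩
    have h5 : (algebraMap k K a0 - x) ^ p = 0 := by
      rw [sub_pow_char, ← map_pow, ha0, hc0, sub_self]
    have h6 := pow_eq_zero_iff hp.ne_zero |>.mp h5
    rw [sub_eq_zero] at h6
    exact h6.symm ▸ rfl
  · apply hmapinj
    rw [heq2, Polynomial.map_sub, Polynomial.map_pow, Polynomial.map_X, Polynomial.map_C,
      map_neg]
    have hc0 : algebraMap k K (-(minpoly k x).coeff 0) = x ^ p := by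
      have := congrArg (fun q => Polynomial.coeff q 0) heq2
      simp only [Polynomial.coeff_map, Polynomial.coeff_sub, Polynomial.coeff_C_zero,
        Polynomial.coeff_X_pow] at this
      rw [if_neg (Nat.ne_of_lt hp.pos)] at this
      rw [map_neg, this]
      ring
    rw [map_neg] at hc0
    rw [hc0]



set_option maxHeartbeats 1000000 in
set_option synthInstance.maxHeartbeats 400000 in
lemma aux_gen {k : Type*} [Field k] (p : ℕ) (hp : p.Prime)
    (m : Ideal (MvPolynomial (Fin 2) k)) (hm : m.IsMaximal)
    (hdeg : Module.finrank k (MvPolynomial (Fin 2) k ⧸ m) = p)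
    (hxr : Ideal.Quotient.mk m (MvPolynomial.X 0) ∈
      Set.range (algebraMap k (MvPolynomial (Fin 2) k ⧸ m)))
    (hyr : Ideal.Quotient.mk m (MvPolynomial.X 1) ∈
      Set.range (algebraMap k (MvPolynomial (Fin 2) k ⧸ m))) : False := by
  letI : Field (MvPolynomial (Fin 2) k ⧸ m) := Ideal.Quotient.field m
  have htop : ∀ z : MvPolynomial (Fin 2) k ⧸ m, z ∈ (⊥ : Subalgebra k _) := by
    intro z
    obtain ⟨P, rfl⟩ := Ideal.Quotient.mk_surjective z
    have hP : P ∈ Algebra.adjoin k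
        (Set.range (MvPolynomial.X : Fin 2 → MvPolynomial (Fin 2) k)) := by
      rw [MvPolynomial.adjoin_range_X]; trivial
    refine Algebra.adjoin_induction (fun w hw => ?_) (fun r => ?_)
      (fun a b _ _ ha hb => ?_) (fun a b _ _ ha hb => ?_) hP
    · obtain ⟨i, rfl⟩ := hw
      fin_cases i
      · rw [Algebra.mem_bot]; exact hxr
      · rw [Algebra.mem_bot]; exact hyr
    · have : Ideal.Quotient.mk m (algebraMap k (MvPolynomial (Fin 2) k) r) =
          algebraMap k (MvPolynomial (Fin 2) k ⧸ m) r := (Ideal.Quotient.mkₐ k m).commutes r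
      rw [this]
      exact Subalgebra.algebraMap_mem _ r
    · rw [map_add]; exact add_mem ha hb
    · rw [_root_.map_mul]; exact mul_mem ha hb
  have hbot : (⊥ : Subalgebra k (MvPolynomial (Fin 2) k ⧸ m)) = ⊤ :=
    top_le_iff.mp fun z _ => htop z
  have h1 : Module.finrank k (MvPolynomial (Fin 2) k ⧸ m) = 1 :=
    Subalgebra.bot_eq_top_iff_finrank_eq_one.mp hbot
  rw [hdeg] at h1
  exact hp.one_lt.ne' h1


set_option maxHeartbeats 2000000 in
set_option synthInstance.maxHeartbeats 400000 in
/-- Normal form for maximal ideals of `k[X,Y]` of prime degree `p`: up to exchanging the two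
variables, such an ideal is generated by an irreducible `g ∈ k[X]` of degree `p` together with
`b(X)·Y − f(X)` for some `b, f ∈ k[X]` of degree at most `p − 1`; moreover, if `k` has
characteristic `p` and the residue field is purely inseparable over `k`, one may take
`g = X^p − t` with `t ∈ k \ k^p`. -/
theorem maximalIdeal_prime_degree_normal_form (k : Type*) [Field k] (p : ℕ) (hp : p.Prime)
    (m : Ideal (MvPolynomial (Fin 2) k)) (hm : m.IsMaximal)
    (hdeg : Module.finrank k (MvPolynomial (Fin 2) k ⧸ m) = p) :
    (∃ m' : Ideal (MvPolynomial (Fin 2) k),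
      (m' = m ∨ m' = Ideal.map
        (MvPolynomial.rename (Equiv.swap (0 : Fin 2) 1) :
          MvPolynomial (Fin 2) k →ₐ[k] MvPolynomial (Fin 2) k) m) ∧
      ∃ g b f : Polynomial k, Irreducible g ∧ g.natDegree = p ∧
        b.natDegree ≤ p - 1 ∧ f.natDegree ≤ p - 1 ∧
        m' = Ideal.span {Polynomial.aeval (MvPolynomial.X 0 : MvPolynomial (Fin 2) k) g,
          Polynomial.aeval (MvPolynomial.X 0 : MvPolynomial (Fin 2) k) b * MvPolynomial.X 1 -
            Polynomial.aeval (MvPolynomial.X 0 : MvPolynomial (Fin 2) k) f}) ∧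
    (CharP k p →
      (∀ x : MvPolynomial (Fin 2) k ⧸ m, ∃ (e : ℕ) (a : k),
        x ^ p ^ e = algebraMap k (MvPolynomial (Fin 2) k ⧸ m) a) →
      ∃ m' : Ideal (MvPolynomial (Fin 2) k),
        (m' = m ∨ m' = Ideal.map
          (MvPolynomial.rename (Equiv.swap (0 : Fin 2) 1) :
            MvPolynomial (Fin 2) k →ₐ[k] MvPolynomial (Fin 2) k) m) ∧
        ∃ (t : k) (b f : Polynomial k), (∀ a : k, a ^ p ≠ t) ∧
          b.natDegree ≤ p - 1 ∧ f.natDegree ≤ p - 1 ∧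
          m' = Ideal.span
            {MvPolynomial.X 0 ^ p - MvPolynomial.C t,
             Polynomial.aeval (MvPolynomial.X 0 : MvPolynomial (Fin 2) k) b * MvPolynomial.X 1 -
               Polynomial.aeval (MvPolynomial.X 0 : MvPolynomial (Fin 2) k) f}) := by
  letI : Field (MvPolynomial (Fin 2) k ⧸ m) := Ideal.Quotient.field m
  haveI : Module.Finite k (MvPolynomial (Fin 2) k ⧸ m) :=
    Module.finite_of_finrank_pos (by rw [hdeg]; exact hp.pos)
  have haev : ∀ t : k, Polynomial.aeval (MvPolynomial.X 0 : MvPolynomial (Fin 2) k)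
      (Polynomial.X ^ p - Polynomial.C t) = MvPolynomial.X 0 ^ p - MvPolynomial.C t := by
    intro t
    simp [MvPolynomial.algebraMap_eq]
  by_cases hxr : Ideal.Quotient.mk m (MvPolynomial.X 0) ∈
      Set.range (algebraMap k (MvPolynomial (Fin 2) k ⧸ m))
  · -- X 0 maps into k: swap the variables
    set σ : Equiv.Perm (Fin 2) := Equiv.swap (0 : Fin 2) 1 with hσ
    set e : MvPolynomial (Fin 2) k ≃ₐ[k] MvPolynomial (Fin 2) k :=
      MvPolynomial.renameEquiv k σ with he
    set m' : Ideal (MvPolynomial (Fin 2) k) := Ideal.map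
      (MvPolynomial.rename σ : MvPolynomial (Fin 2) k →ₐ[k] MvPolynomial (Fin 2) k) m with hm'd
    have hfun : m' = Ideal.map (e : MvPolynomial (Fin 2) k →+* MvPolynomial (Fin 2) k) m := rfl
    set E := Ideal.quotientEquivAlg m m' e hfun with hE
    have hEmk : ∀ r, E (Ideal.Quotient.mk m r) =
        Ideal.Quotient.mk m' (MvPolynomial.rename σ r) := fun r => rfl
    have hmax : m'.IsMaximal := by
      rw [hfun]
      exact Ideal.map_isMaximal_of_equiv
        (e : MvPolynomial (Fin 2) k ≃+* MvPolynomial (Fin 2) k)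
    letI : Field (MvPolynomial (Fin 2) k ⧸ m') := Ideal.Quotient.field m'
    have hdeg' : Module.finrank k (MvPolynomial (Fin 2) k ⧸ m') = p := by
      rw [← hdeg]; exact (E.toLinearEquiv.finrank_eq).symm
    haveI : Module.Finite k (MvPolynomial (Fin 2) k ⧸ m') :=
      Module.finite_of_finrank_pos (by rw [hdeg']; exact hp.pos)
    have hX0 : Ideal.Quotient.mk m' (MvPolynomial.X 0) =
        E (Ideal.Quotient.mk m (MvPolynomial.X 1)) := by
      rw [hEmk, MvPolynomial.rename_X, hσ, Equiv.swap_apply_right]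
    have hx' : Ideal.Quotient.mk m' (MvPolynomial.X 0) ∉
        Set.range (algebraMap k (MvPolynomial (Fin 2) k ⧸ m')) := by
      rintro ⟨a, ha⟩
      have hy : Ideal.Quotient.mk m (MvPolynomial.X 1) ∈
          Set.range (algebraMap k (MvPolynomial (Fin 2) k ⧸ m)) := by
        refine ⟨a, ?_⟩
        have h1 : E (Ideal.Quotient.mk m (MvPolynomial.X 1)) = algebraMap k _ a := by
          rw [← hX0, ha]
        have := congrArg E.symm h1
        rw [AlgEquiv.symm_apply_apply, AlgEquiv.commutes] at this
        exact this.symm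
      exact aux_gen p hp m hm hdeg hxr hy
    obtain ⟨hdeg1, hirr, f, hfdeg, hspan⟩ := aux_span p hp m' hmax hdeg' hx'
    constructor
    · refine ⟨m', Or.inr rfl, minpoly k (Ideal.Quotient.mk m' (MvPolynomial.X 0)), 1, f,
        hirr, hdeg1, by simp, hfdeg, ?_⟩
      simp only [map_one, one_mul]
      exact hspan
    · intro hchar hinsep
      have hinsep' : ∀ z : MvPolynomial (Fin 2) k ⧸ m', ∃ (n : ℕ) (a : k),
          z ^ p ^ n = algebraMap k (MvPolynomial (Fin 2) k ⧸ m') a := by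
        intro z
        obtain ⟨n, a, hna⟩ := hinsep (E.symm z)
        refine ⟨n, a, ?_⟩
        rw [← AlgEquiv.apply_symm_apply E z, ← _root_.map_pow, hna, AlgEquiv.commutes]
      obtain ⟨t, htn, hteq⟩ := aux_insep p hp hchar (Ideal.Quotient.mk m' (MvPolynomial.X 0))
        hx' (IsIntegral.of_finite k _) hdeg1 (hinsep' _)
      refine ⟨m', Or.inr rfl, t, 1, f, htn, by simp, hfdeg, ?_⟩
      simp only [map_one, one_mul]
      rw [hspan, hteq, haev]
  · -- X 0 generates the residue field
    obtain ⟨hdeg1, hirr, f, hfdeg, hspan⟩ := aux_span p hp m hm hdeg hxr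
    constructor
    · refine ⟨m, Or.inl rfl, minpoly k (Ideal.Quotient.mk m (MvPolynomial.X 0)), 1, f,
        hirr, hdeg1, by simp, hfdeg, ?_⟩
      simp only [map_one, one_mul]
      exact hspan
    · intro hchar hinsep
      obtain ⟨t, htn, hteq⟩ := aux_insep p hp hchar (Ideal.Quotient.mk m (MvPolynomial.X 0))
        hxr (IsIntegral.of_finite k _) hdeg1 (hinsep _)
      refine ⟨m, Or.inl rfl, t, 1, f, htn, by simp, hfdeg, ?_⟩
      simp only [map_one, one_mul]
      rw [hspan, hteq, haev]
end

section
/- Let k be a field of characteristic 2 and t ∈ k with t ∉ k². Let b, f ∈ k[X] be polynomials of degree at most 1 such that the ideal m of k[X,Y] generated by X² − t and bY − f is maximal. Then m contains a nonzero polynomial of total degree at most 1. (Equivalently: every closed point of the affine plane of degree 2 with purely inseparable residue field lies on a line defined over k.) -/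
/-!
Modulo `X² - t` the polynomial `b = b₁ X + b₀` is invertible, its norm `b₁² t - b₀²` being nonzero
as `t` is not a square; hence `b Y - f ≡ b (Y - g)` for some `g` of degree at most `1`, and the
prime ideal `m` contains `b` or `Y - g`. If `b = 0`, then `m` contains `f`, or, when also `f = 0`,
it lies in the proper ideal `(X² - t, Y)` and so equals it.
-/

section

variable {k : Type*} [Field k]

theorem eq_zero_of_sq_mul_eq_sq {t : k} (ht : ∀ a : k, a ^ 2 ≠ t) {u v : k}
    (h : u ^ 2 * t = v ^ 2) : u = 0 ∧ v = 0 := by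
  by_cases hu : u = 0
  · subst hu
    exact ⟨rfl, pow_eq_zero_iff two_ne_zero |>.1 (by simpa using h.symm)⟩
  · exact absurd (by field_simp; linear_combination -h) (ht (v / u))

namespace Polynomial

theorem exists_natDegree_le_one_dvd_mul_sub {t : k} (ht : ∀ a : k, a ^ 2 ≠ t) {b f : k[X]}
    (hb : b.natDegree ≤ 1) (hb0 : b ≠ 0) (hf : f.natDegree ≤ 1) :
    ∃ g : k[X], g.natDegree ≤ 1 ∧ X ^ 2 - C t ∣ b * g - f := by
  rw [eq_X_add_C_of_natDegree_le_one hb] at hb0 ⊢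
  rw [eq_X_add_C_of_natDegree_le_one hf]
  generalize b.coeff 1 = b₁, b.coeff 0 = b₀, f.coeff 1 = f₁, f.coeff 0 = f₀ at *
  have hΔ : b₁ ^ 2 * t - b₀ ^ 2 ≠ 0 := fun h ↦ by
    obtain ⟨rfl, rfl⟩ := eq_zero_of_sq_mul_eq_sq ht (sub_eq_zero.1 h)
    simp at hb0
  -- Cramer's rule for `(b₁ X + b₀) (d X + c) ≡ f₁ X + f₀` modulo `X² - t`
  obtain ⟨c, d, h₁, h₀⟩ : ∃ c d : k, b₁ * c + b₀ * d = f₁ ∧ b₀ * c + b₁ * d * t = f₀ :=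
    ⟨(b₁ * f₁ * t - b₀ * f₀) / (b₁ ^ 2 * t - b₀ ^ 2), (b₁ * f₀ - b₀ * f₁) / (b₁ ^ 2 * t - b₀ ^ 2),
      by field_simp; ring, by field_simp; ring⟩
  refine ⟨C d * X + C c, natDegree_linear_le, C (b₁ * d), ?_⟩
  rw [← h₁, ← h₀]
  simp only [map_add, map_mul]
  ring

theorem totalDegree_toMvPolynomial_le {σ : Type*} (i : σ) (p : k[X]) :
    (p.toMvPolynomial i).totalDegree ≤ p.natDegree := by
  conv_lhs => rw [p.as_sum_range_C_mul_X_pow]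
  rw [map_sum]
  refine MvPolynomial.totalDegree_finsetSum_le fun n hn ↦ ?_
  rw [map_mul, map_pow, toMvPolynomial_C, toMvPolynomial_X, MvPolynomial.C_mul_X_pow_eq_monomial]
  refine (MvPolynomial.totalDegree_monomial_le _ _).trans ?_
  simpa [Nat.lt_succ_iff] using hn

end Polynomial

namespace MvPolynomial

variable {σ : Type*}

theorem X_sub_toMvPolynomial_ne_zero {i j : σ} (hij : i ≠ j) (p : Polynomial k) :
    X j - p.toMvPolynomial i ≠ 0 := fun h ↦ by
  classical
  have h₁ := congrArg (eval (Pi.single j 1)) h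
  have h₀ := congrArg (eval 0) h
  simp only [map_sub, eval_X, eval_toMvPolynomial, Pi.single_eq_same, Pi.single_eq_of_ne hij,
    Pi.zero_apply, map_zero] at h₁ h₀
  exact one_ne_zero (by linear_combination h₁ - h₀)

theorem span_X_sq_sub_C_X_ne_top {i j : σ} (hij : i ≠ j) (t : k) :
    Ideal.span {X i ^ 2 - C t, X j} ≠ (⊤ : Ideal (MvPolynomial σ k)) := by
  classical
  obtain ⟨s, hs⟩ := IsAlgClosed.exists_pow_nat_eq (algebraMap k (AlgebraicClosure k) t) two_pos
  let φ : MvPolynomial σ k →ₐ[k] AlgebraicClosure k := aeval (Pi.single i s)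
  refine ne_top_of_le_ne_top (RingHom.ker_ne_top φ.toRingHom) (Ideal.span_le.2 ?_)
  rintro _ (rfl | rfl) <;> simp [φ, hs, hij.symm]

variable {i j : σ} {t : k} {b f : Polynomial k}

theorem exists_mem_ne_zero_totalDegree_le_one_of_isPrime (hij : i ≠ j) (ht : ∀ a : k, a ^ 2 ≠ t)
    (hb : b.natDegree ≤ 1) (hb0 : b ≠ 0) (hf : f.natDegree ≤ 1) {P : Ideal (MvPolynomial σ k)}
    (hP : P.IsPrime) (hq : X i ^ 2 - C t ∈ P)
    (hl : b.toMvPolynomial i * X j - f.toMvPolynomial i ∈ P) :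
    ∃ F ∈ P, F ≠ 0 ∧ F.totalDegree ≤ 1 := by
  obtain ⟨g, hg, q, hgq⟩ := Polynomial.exists_natDegree_le_one_dvd_mul_sub ht hb hb0 hf
  have hprod : b.toMvPolynomial i * (X j - g.toMvPolynomial i) ∈ P := by
    have hgq' := congrArg (Polynomial.toMvPolynomial i) hgq
    simp only [map_sub, map_mul, map_pow, Polynomial.toMvPolynomial_X,
      Polynomial.toMvPolynomial_C] at hgq'
    have : b.toMvPolynomial i * (X j - g.toMvPolynomial i) =
        (b.toMvPolynomial i * X j - f.toMvPolynomial i) - (X i ^ 2 - C t) * q.toMvPolynomial i := by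
      linear_combination -hgq'
    exact this ▸ sub_mem hl (P.mul_mem_right _ hq)
  rcases hP.mem_or_mem hprod with h | h
  · refine ⟨_, h, ?_, (b.totalDegree_toMvPolynomial_le i).trans hb⟩
    exact (map_ne_zero_iff _ (Polynomial.toMvPolynomial_injective i)).2 hb0
  · refine ⟨_, h, X_sub_toMvPolynomial_ne_zero hij g, ?_⟩
    exact (totalDegree_sub _ _).trans
      (max_le (totalDegree_X j).le ((g.totalDegree_toMvPolynomial_le i).trans hg))

theorem exists_mem_ne_zero_totalDegree_le_one_of_isMaximal (hij : i ≠ j)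
    (ht : ∀ a : k, a ^ 2 ≠ t) (hb : b.natDegree ≤ 1) (hf : f.natDegree ≤ 1)
    (hm : (Ideal.span {X i ^ 2 - C t, b.toMvPolynomial i * X j - f.toMvPolynomial i}).IsMaximal) :
    ∃ F ∈ Ideal.span {X i ^ 2 - C t, b.toMvPolynomial i * X j - f.toMvPolynomial i},
      F ≠ 0 ∧ F.totalDegree ≤ 1 := by
  set m := Ideal.span {X i ^ 2 - C t, b.toMvPolynomial i * X j - f.toMvPolynomial i}
  have hq : X i ^ 2 - C t ∈ m := Ideal.subset_span (Set.mem_insert _ _)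
  have hl : b.toMvPolynomial i * X j - f.toMvPolynomial i ∈ m :=
    Ideal.subset_span (Set.mem_insert_of_mem _ rfl)
  rcases ne_or_eq b 0 with hb0 | rfl
  · exact exists_mem_ne_zero_totalDegree_le_one_of_isPrime hij ht hb hb0 hf hm.isPrime hq hl
  rcases ne_or_eq f 0 with hf0 | rfl
  · refine ⟨f.toMvPolynomial i, by simpa using hl, ?_, (f.totalDegree_toMvPolynomial_le i).trans hf⟩
    exact (map_ne_zero_iff _ (Polynomial.toMvPolynomial_injective i)).2 hf0
  have hmJ : m = Ideal.span {X i ^ 2 - C t, X j} := by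
    refine hm.eq_of_le (span_X_sq_sub_C_X_ne_top hij t) (Ideal.span_le.2 ?_)
    rintro _ (rfl | rfl)
    · exact Ideal.subset_span (Set.mem_insert _ _)
    · simp
  exact ⟨X j, hmJ ▸ Ideal.subset_span (Set.mem_insert_of_mem _ rfl), X_ne_zero j,
    (totalDegree_X j).le⟩

end MvPolynomial

end

theorem degree_two_inseparable_point_on_line_general (k : Type*) [Field k]
    (t : k) (ht : ∀ a : k, a ^ 2 ≠ t) (b f : Polynomial k)
    (hb : b.natDegree ≤ 1) (hf : f.natDegree ≤ 1)
    (hm : (Ideal.span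
      {MvPolynomial.X 0 ^ 2 - MvPolynomial.C t,
       Polynomial.aeval (MvPolynomial.X 0 : MvPolynomial (Fin 2) k) b * MvPolynomial.X 1 -
         Polynomial.aeval (MvPolynomial.X 0 : MvPolynomial (Fin 2) k) f} :
      Ideal (MvPolynomial (Fin 2) k)).IsMaximal) :
    ∃ F ∈ (Ideal.span
      {MvPolynomial.X 0 ^ 2 - MvPolynomial.C t,
       Polynomial.aeval (MvPolynomial.X 0 : MvPolynomial (Fin 2) k) b * MvPolynomial.X 1 -
         Polynomial.aeval (MvPolynomial.X 0 : MvPolynomial (Fin 2) k) f} :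
      Ideal (MvPolynomial (Fin 2) k)), F ≠ 0 ∧ F.totalDegree ≤ 1 :=
  MvPolynomial.exists_mem_ne_zero_totalDegree_le_one_of_isMaximal Fin.zero_ne_one ht hb hf hm

/-- Let `k` be a field of characteristic `2` and `t ∈ k \ k²`.  If `b, f ∈ k[X]` have degree at
most `1` and the ideal `m = (X² − t, b(X)Y − f(X))` of `k[X,Y]` is maximal, then `m` contains a
nonzero polynomial of total degree at most `1`: the corresponding purely inseparable point of
degree `2` of the affine plane lies on a line defined over `k`. -/
theorem degree_two_inseparable_point_on_line (k : Type*) [Field k] [CharP k 2]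
    (t : k) (ht : ∀ a : k, a ^ 2 ≠ t) (b f : Polynomial k)
    (hb : b.natDegree ≤ 1) (hf : f.natDegree ≤ 1)
    (hm : (Ideal.span
      {MvPolynomial.X 0 ^ 2 - MvPolynomial.C t,
       Polynomial.aeval (MvPolynomial.X 0 : MvPolynomial (Fin 2) k) b * MvPolynomial.X 1 -
         Polynomial.aeval (MvPolynomial.X 0 : MvPolynomial (Fin 2) k) f} :
      Ideal (MvPolynomial (Fin 2) k)).IsMaximal) :
    ∃ F ∈ (Ideal.span
      {MvPolynomial.X 0 ^ 2 - MvPolynomial.C t,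
       Polynomial.aeval (MvPolynomial.X 0 : MvPolynomial (Fin 2) k) b * MvPolynomial.X 1 -
         Polynomial.aeval (MvPolynomial.X 0 : MvPolynomial (Fin 2) k) f} :
      Ideal (MvPolynomial (Fin 2) k)), F ≠ 0 ∧ F.totalDegree ≤ 1 :=
  degree_two_inseparable_point_on_line_general k t ht b f hb hf hm
end

section
/- Let k = F₂(t) be the rational function field in one variable over the field with two elements, and let A = k[X,Y]/(tX² + Y² + 1) be the coordinate ring of the affine conic tX² + Y² + 1 = 0. Then the ideal of A generated by the images of X and Y + 1 is a maximal ideal of A, and the localization of A at this maximal ideal is not a regular local ring. (In particular, the integral conic (tX² + Y² + Z² = 0) ⊂ P²_k is not regular, hence not normal.) -/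
set_option maxHeartbeats 1600000
set_option synthInstance.maxHeartbeats 400000

/-- A commutative Noetherian local ring is *regular* if its maximal ideal can be generated by
Krull-dimension-many elements. -/
def IsRegularLocalRingOld (S : Type*) [CommRing S] : Prop :=
  IsNoetherianRing S ∧ ∃ h : IsLocalRing S, ∃ s : Finset S,
    Ideal.span (s : Set S) = @IsLocalRing.maximalIdeal S _ h ∧
      (s.card : WithBot ℕ∞) = ringKrullDim S


open Polynomial

lemma two_eq_zero_poly {k : Type} [Field k] (h2 : (2:k) = 0) : (2 : Polynomial k) = 0 := by
  rw [← map_ofNat (C : k →+* Polynomial k) 2, h2, map_zero]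

lemma not_sq_aux {k : Type} [Field k] {t : k} (h2 : (2:k) = 0) (hsq : ∀ c : k, c ^ 2 ≠ t)
    (P Q : Polynomial k) (hQ : Q ≠ 0)
    (heq : C t * P ^ 2 + Q ^ 2 * (X ^ 2 + 1) = 0) : False := by
  have h2' : (2 : Polynomial k) = 0 := two_eq_zero_poly h2
  have hX1 : (X ^ 2 + 1 : Polynomial k) ≠ 0 := fun h => by
    have := congrArg (Polynomial.eval 0) h
    simp at this
  have hP : P ≠ 0 := by
    rintro rfl
    rw [zero_pow (by norm_num), mul_zero, zero_add, mul_eq_zero] at heq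
    rcases heq with h | h
    · exact hQ (pow_eq_zero_iff (by norm_num) |>.mp h)
    · exact hX1 h
  have hneg : ∀ w : Polynomial k, -w = w := by
    intro w
    rw [neg_eq_iff_add_eq_zero, ← two_mul, h2', zero_mul]
  have hxx : C t * P ^ 2 = Q ^ 2 * (X ^ 2 + 1) := by
    linear_combination heq + hneg (Q ^ 2 * (X ^ 2 + 1))
  have key : C t * P ^ 2 = (Q * (X + 1)) ^ 2 := by
    rw [hxx]
    have hx : (X ^ 2 + 1 : Polynomial k) = (X + 1) ^ 2 := by
      linear_combination (-(X : Polynomial k)) * h2'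
    rw [hx]; ring
  have hlc := congrArg Polynomial.leadingCoeff key
  rw [leadingCoeff_mul, leadingCoeff_pow, leadingCoeff_C, leadingCoeff_pow] at hlc
  set m := (Q * (X + 1)).leadingCoeff with hm
  have hPl : P.leadingCoeff ≠ 0 := leadingCoeff_ne_zero.mpr hP
  exact hsq (m * (P.leadingCoeff)⁻¹) (by field_simp; linear_combination -hlc)

lemma t_not_square {k : Type} [Field k] [Algebra (Polynomial (ZMod 2)) k]
    [IsFractionRing (Polynomial (ZMod 2)) k] {t : k}
    (ht : t = algebraMap (Polynomial (ZMod 2)) k Polynomial.X) (c : k) : c ^ 2 ≠ t := by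
  intro hc
  obtain ⟨p, q, hq, rfl⟩ := IsFractionRing.div_surjective (A := Polynomial (ZMod 2)) c
  have hq0 : q ≠ 0 := nonZeroDivisors.ne_zero hq
  have hφq : algebraMap (Polynomial (ZMod 2)) k q ≠ 0 := fun h =>
    hq0 ((IsFractionRing.to_map_eq_zero_iff (K := k)).mp h)
  rw [ht, div_pow] at hc
  have hc2 : algebraMap (Polynomial (ZMod 2)) k (p ^ 2) =
      algebraMap (Polynomial (ZMod 2)) k (Polynomial.X * q ^ 2) := by
    rw [map_pow, map_mul, map_pow]
    field_simp at hc
    linear_combination hc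
  have hpq : p ^ 2 = Polynomial.X * q ^ 2 := IsFractionRing.injective (Polynomial (ZMod 2)) k hc2
  have hp0 : p ≠ 0 := by
    rintro rfl
    rw [zero_pow (by norm_num)] at hpq
    rcases (mul_eq_zero.mp hpq.symm) with h | h
    · exact Polynomial.X_ne_zero h
    · exact hq0 (pow_eq_zero_iff (by norm_num) |>.mp h)
  have hdeg := congrArg Polynomial.natDegree hpq
  rw [Polynomial.natDegree_pow, Polynomial.natDegree_mul Polynomial.X_ne_zero
    (pow_ne_zero 2 hq0), Polynomial.natDegree_pow, Polynomial.natDegree_X] at hdeg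
  omega


open Polynomial in
/-- A quadratic `X² + c` over a domain is prime provided `a² + b²c ≠ 0` whenever `b ≠ 0`. -/
lemma prime_X_sq_add_C {R : Type*} [CommRing R] [IsDomain R] (c : R)
    (hgood : ∀ a b : R, b ≠ 0 → a ^ 2 + b ^ 2 * c ≠ 0) :
    Prime ((X : R[X]) ^ 2 + C c) := by
  set f : R[X] := X ^ 2 + C c with hf
  have hmon : f.Monic := monic_X_pow_add (by simpa using (degree_C_le (a := c)).trans_lt (by norm_num))
  have hdeg : f.degree = 2 := degree_X_pow_add_C (by norm_num) c
  have hc : c ≠ 0 := by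
    intro h0
    exact hgood 0 1 one_ne_zero (by simp [h0])
  refine ⟨hmon.ne_zero, not_isUnit_of_degree_pos f (by rw [hdeg]; norm_num), ?_⟩
  intro p q hpq
  obtain ⟨p', u, rfl, hpdeg⟩ : ∃ p' u, p = p' + f * u ∧ p'.degree < f.degree :=
    ⟨p %ₘ f, p /ₘ f, by rw [modByMonic_add_div p f], degree_modByMonic_lt p hmon⟩
  obtain ⟨q', v, rfl, hqdeg⟩ : ∃ q' v, q = q' + f * v ∧ q'.degree < f.degree :=
    ⟨q %ₘ f, q /ₘ f, by rw [modByMonic_add_div q f], degree_modByMonic_lt q hmon⟩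
  have hdvd : f ∣ p' * q' := by
    obtain ⟨w, hw⟩ := hpq
    exact ⟨w - (p' * v + q' * u + f * u * v), by linear_combination hw⟩
  have deg_le : ∀ r : R[X], r.degree < 2 → r.degree ≤ 1 := by
    intro r hr
    by_cases h0 : r = 0
    · simp [h0]
    · have h2 : r.natDegree < 2 := (natDegree_lt_iff_degree_lt h0).mpr (by exact_mod_cast hr)
      exact natDegree_le_iff_degree_le.mp (Nat.lt_succ_iff.mp h2)
  have hple : p'.degree ≤ 1 := deg_le _ (by rwa [hdeg] at hpdeg)
  have hqle : q'.degree ≤ 1 := deg_le _ (by rwa [hdeg] at hqdeg)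
  set a := p'.coeff 0
  set b := p'.coeff 1
  set a' := q'.coeff 0
  set b' := q'.coeff 1
  have hp' : p' = C b * X + C a := eq_X_add_C_of_degree_le_one hple
  have hq' : q' = C b' * X + C a' := eq_X_add_C_of_degree_le_one hqle
  have hr : f ∣ C (a * b' + a' * b) * X + C (a * a' - b * b' * c) := by
    obtain ⟨w, hw⟩ := hdvd
    refine ⟨w - C b * C b', ?_⟩
    rw [hp', hq'] at hw
    rw [hf]
    simp only [map_add, map_mul, map_sub]
    linear_combination hw
  have hr0 : C (a * b' + a' * b) * X + C (a * a' - b * b' * c) = 0 :=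
    eq_zero_of_dvd_of_degree_lt hr (degree_linear_le.trans_lt (by rw [hdeg]; norm_num))
  have h1 : a * b' + a' * b = 0 := by
    have := congrArg (fun r => Polynomial.coeff r 1) hr0
    simpa using this
  have h2 : a * a' - b * b' * c = 0 := by
    have := congrArg (fun r => Polynomial.coeff r 0) hr0
    simpa using this
  have key : (a = 0 ∧ b = 0) ∨ (a' = 0 ∧ b' = 0) := by
    by_cases hb' : b' = 0
    · by_cases ha' : a' = 0
      · exact Or.inr ⟨ha', hb'⟩
      · refine Or.inl ⟨?_, ?_⟩
        · have haa : a * a' = 0 := by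
            have := h2; rw [hb'] at this; linear_combination this
          rcases mul_eq_zero.mp haa with h | h
          · exact h
          · exact absurd h ha'
        · have hbb : a' * b = 0 := by
            have := h1; rw [hb'] at this; linear_combination this
          rcases mul_eq_zero.mp hbb with h | h
          · exact absurd h ha'
          · exact h
    · have hkey : a * (a' ^ 2 + b' ^ 2 * c) = 0 := by linear_combination a' * h2 + (b' * c) * h1
      have ha : a = 0 := by
        rcases mul_eq_zero.mp hkey with h | h
        · exact h
        · exact absurd h (hgood a' b' hb')
      refine Or.inl ⟨ha, ?_⟩
      have : b * (b' * c) = 0 := by rw [ha] at h2; linear_combination -h2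
      rcases mul_eq_zero.mp this with h | h
      · exact h
      · rcases mul_eq_zero.mp h with h | h
        · exact absurd h hb'
        · exact absurd h hc
  rcases key with ⟨ha, hb⟩ | ⟨ha, hb⟩
  · exact Or.inl ⟨u, by rw [hp', ha, hb, map_zero]; ring⟩
  · exact Or.inr ⟨v, by rw [hq', ha, hb, map_zero]; ring⟩



noncomputable def psi (k : Type) [Field k] : MvPolynomial (Fin 1) k ≃ₐ[k] Polynomial k :=
  (MvPolynomial.renameEquiv k (Equiv.equivPUnit.{1,1} (Fin 1))).trans (MvPolynomial.pUnitAlgEquiv k)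

lemma psi_X {k : Type} [Field k] : psi k (MvPolynomial.X 0) = Polynomial.X := by
  simp [psi, MvPolynomial.pUnitAlgEquiv]

lemma psi_C {k : Type} [Field k] (a : k) : psi k (MvPolynomial.C a) = Polynomial.C a := by
  simp [psi, MvPolynomial.pUnitAlgEquiv]

lemma mv1_not_sq {k : Type} [Field k] {t : k} (h2 : (2:k) = 0) (hsq : ∀ c : k, c ^ 2 ≠ t)
    (a b : MvPolynomial (Fin 1) k) (hb : b ≠ 0) :
    a ^ 2 + b ^ 2 * (MvPolynomial.C t⁻¹ * ((MvPolynomial.X 0 : MvPolynomial (Fin 1) k) ^ 2 + 1)) ≠ 0 := by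
  intro heq
  have ht0 : t ≠ 0 := fun h => hsq 0 (by rw [h]; ring)
  have heq2 : MvPolynomial.C t * a ^ 2 + b ^ 2 * ((MvPolynomial.X 0 : MvPolynomial (Fin 1) k) ^ 2 + 1) = 0 := by
    have hCt : (MvPolynomial.C t : MvPolynomial (Fin 1) k) * MvPolynomial.C t⁻¹ = 1 := by
      rw [← MvPolynomial.C_mul, mul_inv_cancel₀ ht0, MvPolynomial.C_1]
    calc MvPolynomial.C t * a ^ 2 + b ^ 2 * ((MvPolynomial.X 0 : MvPolynomial (Fin 1) k) ^ 2 + 1)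
        = MvPolynomial.C t * (a ^ 2 + b ^ 2 * (MvPolynomial.C t⁻¹ * ((MvPolynomial.X 0 : MvPolynomial (Fin 1) k) ^ 2 + 1)))
          + (1 - MvPolynomial.C t * MvPolynomial.C t⁻¹) * (b ^ 2 * ((MvPolynomial.X 0 : MvPolynomial (Fin 1) k) ^ 2 + 1)) := by ring
      _ = 0 := by rw [heq, hCt]; ring
  have happ := congrArg (psi k) heq2
  rw [map_add, map_mul, map_mul, map_pow, map_pow, map_add, map_pow, map_one, map_zero,
    psi_X, psi_C] at happ
  exact not_sq_aux h2 hsq (psi k a) (psi k b)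
    (fun h => hb (by simpa using congrArg (psi k).symm h)) happ

lemma finSuccEquiv_C' {k : Type} [Field k] (a : k) :
    MvPolynomial.finSuccEquiv k 1 (MvPolynomial.C a) = Polynomial.C (MvPolynomial.C a) := by
  simp [MvPolynomial.finSuccEquiv_apply]

lemma conic_poly_eq {k : Type} [Field k] (t : k) (ht0 : t ≠ 0) :
    MvPolynomial.finSuccEquiv k 1
        (MvPolynomial.C t * MvPolynomial.X 0 ^ 2 + MvPolynomial.X 1 ^ 2 + 1) =
      (Polynomial.X ^ 2 +
          Polynomial.C (MvPolynomial.C t⁻¹ *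
            ((MvPolynomial.X 0 : MvPolynomial (Fin 1) k) ^ 2 + 1))) *
        Polynomial.C (MvPolynomial.C t) := by
  have h1 : (1 : Fin 2) = Fin.succ 0 := rfl
  rw [map_add, map_add, map_mul, map_pow, map_pow, map_one, finSuccEquiv_C', h1,
    MvPolynomial.finSuccEquiv_X_zero, MvPolynomial.finSuccEquiv_X_succ]
  have hCt : (MvPolynomial.C t : MvPolynomial (Fin 1) k) * MvPolynomial.C t⁻¹ = 1 := by
    rw [← MvPolynomial.C_mul, mul_inv_cancel₀ ht0, MvPolynomial.C_1]
  calc Polynomial.C (MvPolynomial.C t) * Polynomial.X ^ 2 +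
        Polynomial.C ((MvPolynomial.X 0 : MvPolynomial (Fin 1) k)) ^ 2 + 1
      = Polynomial.C (MvPolynomial.C t) * Polynomial.X ^ 2 +
        Polynomial.C ((MvPolynomial.X 0 : MvPolynomial (Fin 1) k) ^ 2 + 1) := by
        rw [map_add, map_pow, map_one]; ring
    _ = _ := by
        rw [add_mul, ← Polynomial.C_mul]
        have hsimp : (MvPolynomial.C t⁻¹ *
            ((MvPolynomial.X 0 : MvPolynomial (Fin 1) k) ^ 2 + 1)) * MvPolynomial.C t =
            (MvPolynomial.X 0 : MvPolynomial (Fin 1) k) ^ 2 + 1 := by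
          rw [mul_comm, ← mul_assoc, hCt, one_mul]
        rw [hsimp]
        ring

lemma conic_prime {k : Type} [Field k] {t : k} (h2 : (2:k) = 0) (hsq : ∀ c : k, c ^ 2 ≠ t) :
    Prime (MvPolynomial.C t * MvPolynomial.X 0 ^ 2 + MvPolynomial.X 1 ^ 2 + 1 :
      MvPolynomial (Fin 2) k) := by
  have ht0 : t ≠ 0 := fun h => hsq 0 (by rw [h]; ring)
  set c : MvPolynomial (Fin 1) k :=
    MvPolynomial.C t⁻¹ * ((MvPolynomial.X 0 : MvPolynomial (Fin 1) k) ^ 2 + 1) with hc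
  have hprime : Prime ((Polynomial.X : Polynomial (MvPolynomial (Fin 1) k)) ^ 2 +
      Polynomial.C c) := prime_X_sq_add_C c (fun a b hb => mv1_not_sq h2 hsq a b hb)
  have hunit : IsUnit (Polynomial.C (MvPolynomial.C t) :
      Polynomial (MvPolynomial (Fin 1) k)) :=
    ((isUnit_iff_ne_zero.mpr ht0).map (MvPolynomial.C : k →+* MvPolynomial (Fin 1) k)).map
      (Polynomial.C : MvPolynomial (Fin 1) k →+* Polynomial (MvPolynomial (Fin 1) k))
  have hassoc : Associated ((Polynomial.X : Polynomial (MvPolynomial (Fin 1) k)) ^ 2 +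
      Polynomial.C c)
      (MvPolynomial.finSuccEquiv k 1
        (MvPolynomial.C t * MvPolynomial.X 0 ^ 2 + MvPolynomial.X 1 ^ 2 + 1)) :=
    ⟨hunit.unit, by rw [IsUnit.unit_spec, ← conic_poly_eq t ht0]⟩
  have : Prime (MvPolynomial.finSuccEquiv k 1
      (MvPolynomial.C t * MvPolynomial.X 0 ^ 2 + MvPolynomial.X 1 ^ 2 + 1)) :=
    hassoc.prime hprime
  exact (MulEquiv.prime_iff (MvPolynomial.finSuccEquiv k 1).toRingEquiv.toMulEquiv).mp this

lemma X0_not_dvd {k : Type} [Field k] {t : k} (h2 : (2:k) = 0) (hsq : ∀ c : k, c ^ 2 ≠ t) :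
    ¬ (MvPolynomial.C t * MvPolynomial.X 0 ^ 2 + MvPolynomial.X 1 ^ 2 + 1 :
      MvPolynomial (Fin 2) k) ∣ MvPolynomial.X 0 := by
  intro hdvd
  have ht0 : t ≠ 0 := fun h => hsq 0 (by rw [h]; ring)
  have hdvd2 := map_dvd (MvPolynomial.finSuccEquiv k 1) hdvd
  rw [conic_poly_eq t ht0, MvPolynomial.finSuccEquiv_X_zero] at hdvd2
  have hdvd3 : ((Polynomial.X : Polynomial (MvPolynomial (Fin 1) k)) ^ 2 +
      Polynomial.C (MvPolynomial.C t⁻¹ *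
        ((MvPolynomial.X 0 : MvPolynomial (Fin 1) k) ^ 2 + 1))) ∣ Polynomial.X :=
    dvd_of_mul_right_dvd hdvd2
  have hX0 : (Polynomial.X : Polynomial (MvPolynomial (Fin 1) k)) = 0 :=
    Polynomial.eq_zero_of_dvd_of_degree_lt hdvd3
      (by rw [Polynomial.degree_X_pow_add_C (by norm_num), Polynomial.degree_X]; norm_num)
  exact Polynomial.X_ne_zero hX0

noncomputable section

variable (k : Type) [Field k]

/-- The ideal `(tX² + Y² + 1)` of `k[X,Y]`. -/
def conicIdeal (t : k) : Ideal (MvPolynomial (Fin 2) k) :=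
  Ideal.span {MvPolynomial.C t * MvPolynomial.X 0 ^ 2 + MvPolynomial.X 1 ^ 2 + 1}

/-- The coordinate ring `A = k[X,Y]/(tX² + Y² + 1)` of the affine conic `tX² + Y² + 1 = 0`. -/
abbrev ConicRing (t : k) : Type := MvPolynomial (Fin 2) k ⧸ conicIdeal k t

/-- The ideal of `A` generated by the images of `X` and `Y + 1`. -/
def conicSingularIdeal (t : k) : Ideal (ConicRing k t) :=
  Ideal.span {Ideal.Quotient.mk (conicIdeal k t) (MvPolynomial.X 0),
    Ideal.Quotient.mk (conicIdeal k t) (MvPolynomial.X 1 + 1)}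

lemma two_eq_zero_mv {n : ℕ} (h2 : (2:k) = 0) : (2 : MvPolynomial (Fin n) k) = 0 := by
  rw [← map_ofNat (MvPolynomial.C : k →+* MvPolynomial (Fin n) k) 2, h2, map_zero]

lemma sub_eval_mem_span (h2 : (2:k) = 0) (p : MvPolynomial (Fin 2) k) :
    p - MvPolynomial.C (MvPolynomial.eval ![0, 1] p) ∈
      Ideal.span {(MvPolynomial.X 0 : MvPolynomial (Fin 2) k), MvPolynomial.X 1 + 1} := by
  have hXi : ∀ i : Fin 2, (MvPolynomial.X i : MvPolynomial (Fin 2) k) -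
      MvPolynomial.C (![0, 1] i) ∈
      Ideal.span {(MvPolynomial.X 0 : MvPolynomial (Fin 2) k), MvPolynomial.X 1 + 1} := by
    intro i
    fin_cases i
    · simpa using Ideal.subset_span (Set.mem_insert _ _)
    · show (MvPolynomial.X 1 : MvPolynomial (Fin 2) k) - MvPolynomial.C (![0, 1] 1) ∈ _
      have h2' : (2 : MvPolynomial (Fin 2) k) = 0 := two_eq_zero_mv k h2
      have heq : (MvPolynomial.X 1 : MvPolynomial (Fin 2) k) - MvPolynomial.C (![0, 1] 1) =
          MvPolynomial.X 1 + 1 := by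
        simp only [Matrix.cons_val_one, Matrix.head_cons, Matrix.cons_val_zero, MvPolynomial.C_1]
        linear_combination -h2'
      rw [heq]
      exact Ideal.subset_span (Set.mem_insert_of_mem _ rfl)
  induction p using MvPolynomial.induction_on with
  | C a => simp
  | add p q hp hq =>
      have := Ideal.add_mem _ hp hq
      have heq : p + q - MvPolynomial.C (MvPolynomial.eval ![0, 1] (p + q)) =
          (p - MvPolynomial.C (MvPolynomial.eval ![0, 1] p)) +
            (q - MvPolynomial.C (MvPolynomial.eval ![0, 1] q)) := by
        rw [map_add, map_add]; ring
      rw [heq]; exact this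
  | mul_X p i hp =>
      have heq : p * MvPolynomial.X i -
          MvPolynomial.C (MvPolynomial.eval ![0, 1] (p * MvPolynomial.X i)) =
          (p - MvPolynomial.C (MvPolynomial.eval ![0, 1] p)) * MvPolynomial.X i +
            MvPolynomial.C (MvPolynomial.eval ![0, 1] p) *
              (MvPolynomial.X i - MvPolynomial.C (![0, 1] i)) := by
        rw [map_mul, MvPolynomial.eval_X, MvPolynomial.C_mul]; ring
      rw [heq]
      exact Ideal.add_mem _ (Ideal.mul_mem_right _ _ hp) (Ideal.mul_mem_left _ _ (hXi i))

lemma conic_vanish (t : k) (h2 : (2:k) = 0) :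
    ∀ a ∈ conicIdeal k t, MvPolynomial.eval ![0, 1] a = 0 := by
  intro a ha
  rw [conicIdeal, Ideal.mem_span_singleton] at ha
  obtain ⟨g, rfl⟩ := ha
  rw [map_mul]
  have hf : MvPolynomial.eval ![0, 1]
      (MvPolynomial.C t * MvPolynomial.X 0 ^ 2 + MvPolynomial.X 1 ^ 2 + 1) = 0 := by
    simp
    linear_combination h2
  rw [hf, zero_mul]

/-- Evaluation of the coordinate ring at the point `(0,1)`. -/
def conicResidue (t : k) (h2 : (2:k) = 0) : ConicRing k t →+* k :=
  Ideal.Quotient.lift (conicIdeal k t) (MvPolynomial.eval ![0, 1]) (conic_vanish k t h2)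

lemma conicResidue_mk (t : k) (h2 : (2:k) = 0) (p : MvPolynomial (Fin 2) k) :
    conicResidue k t h2 (Ideal.Quotient.mk (conicIdeal k t) p) = MvPolynomial.eval ![0, 1] p :=
  Ideal.Quotient.lift_mk _ _ _

lemma conicResidue_surjective (t : k) (h2 : (2:k) = 0) :
    Function.Surjective (conicResidue k t h2) := fun c =>
  ⟨Ideal.Quotient.mk _ (MvPolynomial.C c), by rw [conicResidue_mk]; simp⟩

lemma ker_conicResidue (t : k) (h2 : (2:k) = 0) :
    RingHom.ker (conicResidue k t h2) = conicSingularIdeal k t := by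
  have hmap : conicSingularIdeal k t =
      (Ideal.span {(MvPolynomial.X 0 : MvPolynomial (Fin 2) k), MvPolynomial.X 1 + 1}).map
        (Ideal.Quotient.mk (conicIdeal k t)) := by
    rw [Ideal.map_span, Set.image_pair, conicSingularIdeal]
  apply le_antisymm
  · intro a ha
    obtain ⟨p, rfl⟩ := Ideal.Quotient.mk_surjective a
    rw [RingHom.mem_ker, conicResidue_mk] at ha
    have := sub_eval_mem_span k h2 p
    rw [ha, map_zero, sub_zero] at this
    rw [hmap]
    exact Ideal.mem_map_of_mem _ this
  · rw [conicSingularIdeal, Ideal.span_le]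
    rintro y (rfl | rfl)
    · rw [SetLike.mem_coe, RingHom.mem_ker, conicResidue_mk]
      simp
    · rw [SetLike.mem_coe, RingHom.mem_ker, conicResidue_mk]
      simp
      linear_combination h2

lemma conicSingular_isMaximal (t : k) (h2 : (2:k) = 0) :
    (conicSingularIdeal k t).IsMaximal := by
  rw [← ker_conicResidue k t h2]
  exact RingHom.ker_isMaximal_of_surjective _ (conicResidue_surjective k t h2)

lemma conicIdeal_isPrime {t : k} (h2 : (2:k) = 0) (hsq : ∀ c : k, c ^ 2 ≠ t) :
    (conicIdeal k t).IsPrime := by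
  rw [conicIdeal]
  exact (Ideal.span_singleton_prime (conic_prime h2 hsq).ne_zero).mpr (conic_prime h2 hsq)

/-- There is no chain of three distinct primes in the coordinate ring of the conic. -/
lemma conic_no_chain {t : k} (h2 : (2:k) = 0) (hsq : ∀ c : k, c ^ 2 ≠ t)
    (P₀ P₁ P₂ : Ideal (ConicRing k t)) (h₀ : P₀.IsPrime) (h₁ : P₁.IsPrime) (h₂ : P₂.IsPrime)
    (l01 : P₀ < P₁) (l12 : P₁ < P₂) : False := by
  letI : Algebra (Polynomial k) (ConicRing k t) :=
    ((Ideal.Quotient.mk (conicIdeal k t)).comp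
      (Polynomial.aeval (MvPolynomial.X 0 : MvPolynomial (Fin 2) k)).toRingHom).toAlgebra
  have halg : (algebraMap (Polynomial k) (ConicRing k t)) =
      (Ideal.Quotient.mk (conicIdeal k t)).comp
        (Polynomial.aeval (MvPolynomial.X 0 : MvPolynomial (Fin 2) k)).toRingHom := rfl
  set y : ConicRing k t := Ideal.Quotient.mk (conicIdeal k t) (MvPolynomial.X 1) with hy
  have hyint : IsIntegral (Polynomial k) y := by
    refine ⟨Polynomial.X ^ 2 + Polynomial.C (Polynomial.C t * Polynomial.X ^ 2 + 1),
      Polynomial.monic_X_pow_add (n := 2)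
        ((Polynomial.degree_C_le (a := Polynomial.C t * Polynomial.X ^ 2 + 1)).trans_lt
          (by norm_num)), ?_⟩
    have key : (algebraMap (Polynomial k) (ConicRing k t))
        (Polynomial.C t * Polynomial.X ^ 2 + 1) =
        Ideal.Quotient.mk (conicIdeal k t)
          (MvPolynomial.C t * MvPolynomial.X 0 ^ 2 + 1) := by
      rw [halg]
      simp [Polynomial.aeval_C, MvPolynomial.algebraMap_eq]
    rw [Polynomial.eval₂_add, Polynomial.eval₂_pow, Polynomial.eval₂_X, Polynomial.eval₂_C,
      key, hy, ← map_pow, ← map_add, Ideal.Quotient.eq_zero_iff_mem]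
    have heq : (MvPolynomial.X 1 : MvPolynomial (Fin 2) k) ^ 2 +
        (MvPolynomial.C t * MvPolynomial.X 0 ^ 2 + 1) =
        MvPolynomial.C t * MvPolynomial.X 0 ^ 2 + MvPolynomial.X 1 ^ 2 + 1 := by ring
    rw [heq, conicIdeal]
    exact Ideal.subset_span rfl
  have hadj : Algebra.adjoin (Polynomial k) ({y} : Set (ConicRing k t)) = ⊤ := by
    rw [eq_top_iff]
    rintro a -
    obtain ⟨p, rfl⟩ := Ideal.Quotient.mk_surjective a
    induction p using MvPolynomial.induction_on with
    | C c =>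
        have hC : Ideal.Quotient.mk (conicIdeal k t) (MvPolynomial.C c) =
            algebraMap (Polynomial k) (ConicRing k t) (Polynomial.C c) := by
          rw [halg]
          simp [Polynomial.aeval_C, MvPolynomial.algebraMap_eq]
        rw [hC]
        exact Subalgebra.algebraMap_mem _ _
    | add p q hp hq => rw [map_add]; exact add_mem hp hq
    | mul_X p i hp =>
        rw [map_mul]
        refine mul_mem hp ?_
        fin_cases i
        · show Ideal.Quotient.mk (conicIdeal k t) (MvPolynomial.X 0) ∈
            Algebra.adjoin (Polynomial k) ({y} : Set (ConicRing k t))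
          have hX0 : Ideal.Quotient.mk (conicIdeal k t) (MvPolynomial.X 0) =
              algebraMap (Polynomial k) (ConicRing k t) Polynomial.X := by
            rw [halg]; simp
          rw [hX0]
          exact Subalgebra.algebraMap_mem _ _
        · exact Algebra.subset_adjoin rfl
  haveI : Module.Finite (Polynomial k) (ConicRing k t) :=
    ⟨by rw [← Algebra.top_toSubmodule, ← hadj]; exact hyint.fg_adjoin_singleton⟩
  haveI : Algebra.IsIntegral (Polynomial k) (ConicRing k t) := Algebra.IsIntegral.of_finite _ _
  haveI := h₀; haveI := h₁; haveI := h₂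
  obtain ⟨u1, hu1P1, hu1P0⟩ := SetLike.exists_of_lt l01
  obtain ⟨u2, hu2P2, hu2P1⟩ := SetLike.exists_of_lt l12
  have q01 := Ideal.comap_lt_comap_of_integral_mem_sdiff (R := Polynomial k) (I := P₀) l01.le ⟨hu1P1, hu1P0⟩
    (Algebra.IsIntegral.isIntegral u1)
  have q12 := Ideal.comap_lt_comap_of_integral_mem_sdiff (R := Polynomial k) (I := P₁) l12.le ⟨hu2P2, hu2P1⟩
    (Algebra.IsIntegral.isIntegral u2)
  have hq1ne : P₁.comap (algebraMap (Polynomial k) (ConicRing k t)) ≠ ⊥ := ne_bot_of_gt q01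
  haveI hc1 : (P₁.comap (algebraMap (Polynomial k) (ConicRing k t))).IsPrime :=
    Ideal.comap_isPrime (algebraMap (Polynomial k) (ConicRing k t)) _
  haveI hc2 : (P₂.comap (algebraMap (Polynomial k) (ConicRing k t))).IsPrime :=
    Ideal.comap_isPrime (algebraMap (Polynomial k) (ConicRing k t)) _
  have hq1max : (P₁.comap (algebraMap (Polynomial k) (ConicRing k t))).IsMaximal :=
    IsPrime.to_maximal_ideal hq1ne
  have htop : P₂.comap (algebraMap (Polynomial k) (ConicRing k t)) = ⊤ := hq1max.1.2 _ q12
  exact hc2.ne_top htop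

/-- Let `k = F₂(t)` be the rational function field in one variable over `F₂` (the fraction field
of `F₂[t]`, with `t` the image of the variable), and let `A = k[X,Y]/(tX² + Y² + 1)` be the
coordinate ring of the affine conic `tX² + Y² + 1 = 0`.  Then the ideal of `A` generated by the
images of `X` and `Y + 1` is maximal, and the localization of `A` at it is not a regular local
ring.  In particular the integral conic `(tX² + Y² + Z² = 0) ⊆ P²_k` is not regular, hence not
normal. -/
theorem conic_char_two_not_regular_at_point
    [Algebra (Polynomial (ZMod 2)) k] [IsFractionRing (Polynomial (ZMod 2)) k]
    (t : k) (ht : t = algebraMap (Polynomial (ZMod 2)) k Polynomial.X) :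
    ∃ hmax : (conicSingularIdeal k t).IsMaximal,
      ¬ IsRegularLocalRingOld
        (@Localization.AtPrime (ConicRing k t) _ (conicSingularIdeal k t) hmax.isPrime) := by
  have hzz : (2 : Polynomial (ZMod 2)) = 0 := by
    rw [← map_ofNat (Polynomial.C : ZMod 2 →+* Polynomial (ZMod 2)) 2]
    have h22 : (2 : ZMod 2) = 0 := rfl
    rw [h22, map_zero]
  have h2 : (2 : k) = 0 := by
    rw [← map_ofNat (algebraMap (Polynomial (ZMod 2)) k) 2, hzz, map_zero]
  have hsq : ∀ c : k, c ^ 2 ≠ t := t_not_square ht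
  have hmax : (conicSingularIdeal k t).IsMaximal := conicSingular_isMaximal k t h2
  refine ⟨hmax, ?_⟩
  haveI hmprime : (conicSingularIdeal k t).IsPrime := hmax.isPrime
  haveI hIprime : (conicIdeal k t).IsPrime := conicIdeal_isPrime k h2 hsq
  rintro ⟨-, hLoc, s, hspan0, hcard⟩
  have hspan : Ideal.span (s : Set (Localization.AtPrime (conicSingularIdeal k t))) =
      IsLocalRing.maximalIdeal (Localization.AtPrime (conicSingularIdeal k t)) := hspan0
  set x : ConicRing k t := Ideal.Quotient.mk (conicIdeal k t) (MvPolynomial.X 0) with hxdef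
  set v : ConicRing k t := Ideal.Quotient.mk (conicIdeal k t) (MvPolynomial.X 1 + 1) with hvdef
  have hxm : x ∈ conicSingularIdeal k t := Ideal.subset_span (Set.mem_insert _ _)
  have hvm : v ∈ conicSingularIdeal k t := Ideal.subset_span (Set.mem_insert_of_mem _ rfl)
  have hx0 : x ≠ 0 := by
    intro h
    rw [hxdef, Ideal.Quotient.eq_zero_iff_mem, conicIdeal, Ideal.mem_span_singleton] at h
    exact X0_not_dvd h2 hsq h
  set xS := algebraMap (ConicRing k t) (Localization.AtPrime (conicSingularIdeal k t)) x
    with hxSdef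
  set vS := algebraMap (ConicRing k t) (Localization.AtPrime (conicSingularIdeal k t)) v
    with hvSdef
  have hinj : Function.Injective
      (algebraMap (ConicRing k t) (Localization.AtPrime (conicSingularIdeal k t))) :=
    IsLocalization.injective (Localization.AtPrime (conicSingularIdeal k t)) (Ideal.primeCompl_le_nonZeroDivisors (conicSingularIdeal k t))
  have hxS0 : xS ≠ 0 := fun h => hx0 (hinj (by rw [map_zero]; exact h))
  have hmaxid : Ideal.map
        (algebraMap (ConicRing k t) (Localization.AtPrime (conicSingularIdeal k t)))
        (conicSingularIdeal k t) =
      IsLocalRing.maximalIdeal (Localization.AtPrime (conicSingularIdeal k t)) :=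
    Localization.AtPrime.map_eq_maximalIdeal
  have hxSm : xS ∈ IsLocalRing.maximalIdeal (Localization.AtPrime (conicSingularIdeal k t)) := by
    rw [← hmaxid]; exact Ideal.mem_map_of_mem _ hxm
  have hvSm : vS ∈ IsLocalRing.maximalIdeal (Localization.AtPrime (conicSingularIdeal k t)) := by
    rw [← hmaxid]; exact Ideal.mem_map_of_mem _ hvm
  -- the Krull dimension of the localization is at most 1
  have hdim : ringKrullDim (Localization.AtPrime (conicSingularIdeal k t)) ≤ 1 := by
    rw [ringKrullDim]
    refine iSup_le fun p => ?_
    rcases Nat.lt_or_ge p.length 2 with hl | hl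
    · have h1 : p.length ≤ 1 := by omega
      calc ((p.length : ℕ∞) : WithBot ℕ∞) ≤ ((1 : ℕ∞) : WithBot ℕ∞) := by
            rw [WithBot.coe_le_coe]
            exact_mod_cast h1
        _ = 1 := rfl
    · exfalso
      have h01 : p ⟨0, by omega⟩ < p ⟨1, by omega⟩ := p.strictMono (Fin.mk_lt_mk.mpr (by omega))
      have h12 : p ⟨1, by omega⟩ < p ⟨2, by omega⟩ := p.strictMono (Fin.mk_lt_mk.mpr (by omega))
      set o := IsLocalization.AtPrime.orderIsoOfPrime
        (S := Localization.AtPrime (conicSingularIdeal k t)) (conicSingularIdeal k t) with ho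
      have hlt : ∀ Q Q' : PrimeSpectrum (Localization.AtPrime (conicSingularIdeal k t)),
          Q < Q' → (o ⟨Q.asIdeal, Q.isPrime⟩).1 < (o ⟨Q'.asIdeal, Q'.isPrime⟩).1 := by
        intro Q Q' hQQ
        have hsub : (⟨Q.asIdeal, Q.isPrime⟩ :
            {p : Ideal (Localization.AtPrime (conicSingularIdeal k t)) // p.IsPrime}) <
            ⟨Q'.asIdeal, Q'.isPrime⟩ :=
          Subtype.mk_lt_mk.mpr ((PrimeSpectrum.asIdeal_lt_asIdeal _ _).mpr hQQ)
        exact Subtype.coe_lt_coe.mpr (o.lt_iff_lt.mpr hsub)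
      exact conic_no_chain k h2 hsq _ _ _
        (o ⟨(p ⟨0, by omega⟩).asIdeal, (p ⟨0, by omega⟩).isPrime⟩).2.1
        (o ⟨(p ⟨1, by omega⟩).asIdeal, (p ⟨1, by omega⟩).isPrime⟩).2.1
        (o ⟨(p ⟨2, by omega⟩).asIdeal, (p ⟨2, by omega⟩).isPrime⟩).2.1
        (hlt _ _ h01) (hlt _ _ h12)
  have hcard1 : s.card ≤ 1 := by
    have hle : ((s.card : ℕ∞) : WithBot ℕ∞) ≤ ((1 : ℕ∞) : WithBot ℕ∞) := by
      rw [show ((s.card : ℕ∞) : WithBot ℕ∞) = ((s.card : ℕ) : WithBot ℕ∞) from rfl, hcard]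
      exact hdim.trans_eq rfl
    rw [WithBot.coe_le_coe] at hle
    exact_mod_cast hle
  rcases Nat.le_one_iff_eq_zero_or_eq_one.mp hcard1 with h0 | h1
  · have hs : s = ∅ := Finset.card_eq_zero.mp h0
    rw [hs, Finset.coe_empty, Ideal.span_empty] at hspan
    rw [← hspan] at hxSm
    exact hxS0 (Ideal.mem_bot.mp hxSm)
  · obtain ⟨g, hg⟩ := Finset.card_eq_one.mp h1
    rw [hg, Finset.coe_singleton] at hspan
    by_cases hg0 : g = 0
    · rw [hg0, Ideal.span_singleton_eq_bot.mpr rfl] at hspan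
      rw [← hspan] at hxSm
      exact hxS0 (Ideal.mem_bot.mp hxSm)
    rw [← hspan] at hxSm hvSm
    obtain ⟨a, ha⟩ := Ideal.mem_span_singleton'.mp hxSm
    obtain ⟨b, hb⟩ := Ideal.mem_span_singleton'.mp hvSm
    have hgmem : g ∈ Ideal.span
        ({xS, vS} : Set (Localization.AtPrime (conicSingularIdeal k t))) := by
      have h1' : g ∈ Ideal.span {g} := Ideal.subset_span rfl
      rw [hspan, ← hmaxid] at h1'
      have hmapeq : Ideal.map
          (algebraMap (ConicRing k t) (Localization.AtPrime (conicSingularIdeal k t)))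
          (conicSingularIdeal k t) =
          Ideal.span ({xS, vS} : Set (Localization.AtPrime (conicSingularIdeal k t))) := by
        show Ideal.map
            (algebraMap (ConicRing k t) (Localization.AtPrime (conicSingularIdeal k t)))
            (Ideal.span {x, v}) = _
        rw [Ideal.map_span, Set.image_pair]
      rwa [hmapeq] at h1'
    obtain ⟨c, d, hcd⟩ := Ideal.mem_span_pair.mp hgmem
    have hrelA : algebraMap k (ConicRing k t) t * x ^ 2 + v ^ 2 = 0 := by
      have halg : algebraMap k (ConicRing k t) t =
          Ideal.Quotient.mk (conicIdeal k t) (MvPolynomial.C t) := rfl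
      rw [halg, hxdef, hvdef, ← map_pow, ← map_pow, ← map_mul, ← map_add,
        Ideal.Quotient.eq_zero_iff_mem]
      have h2' : (2 : MvPolynomial (Fin 2) k) = 0 := two_eq_zero_mv k h2
      have heq : MvPolynomial.C t * MvPolynomial.X 0 ^ 2 +
          ((MvPolynomial.X 1 : MvPolynomial (Fin 2) k) + 1) ^ 2 =
          MvPolynomial.C t * MvPolynomial.X 0 ^ 2 + MvPolynomial.X 1 ^ 2 + 1 := by
        linear_combination (MvPolynomial.X 1 : MvPolynomial (Fin 2) k) * h2'
      rw [heq, conicIdeal]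
      exact Ideal.subset_span rfl
    set T := algebraMap (ConicRing k t) (Localization.AtPrime (conicSingularIdeal k t))
      (algebraMap k (ConicRing k t) t) with hT
    have hrelS : T * xS ^ 2 + vS ^ 2 = 0 := by
      have hc := congrArg
        (algebraMap (ConicRing k t) (Localization.AtPrime (conicSingularIdeal k t))) hrelA
      rw [map_add, map_mul, map_pow, map_pow, map_zero] at hc
      exact hc
    haveI hIR : IsRightCancelAdd (Localization.AtPrime (conicSingularIdeal k t)) := by
      letI : CommRing (Localization.AtPrime (conicSingularIdeal k t)) := inferInstance
      infer_instance
    have hquad : T * a ^ 2 + b ^ 2 = 0 := by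
      rw [← ha, ← hb] at hrelS
      have hgg : g ^ 2 * (T * a ^ 2 + b ^ 2) = 0 := by linear_combination hrelS
      rcases mul_eq_zero.mp hgg with h | h
      · exact absurd (pow_eq_zero_iff two_ne_zero |>.mp h) hg0
      · exact h
    have hone : c * a + d * b = 1 := by
      rw [← ha, ← hb] at hcd
      have hzero : g * (1 - (c * a + d * b)) = 0 := by linear_combination -hcd
      rcases mul_eq_zero.mp hzero with h | h
      · exact absurd h hg0
      · linear_combination -h
    have hunit : IsUnit a ∨ IsUnit b := by
      rcases IsLocalRing.isUnit_or_isUnit_of_isUnit_add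
          (a := c * a) (b := d * b) (by rw [hone]; exact isUnit_one) with h | h
      · exact Or.inl (isUnit_of_mul_isUnit_right h)
      · exact Or.inr (isUnit_of_mul_isUnit_right h)
    have hlift : ∀ y : (conicSingularIdeal k t).primeCompl,
        IsUnit (conicResidue k t h2 y.1) := by
      rintro ⟨z, hz⟩
      refine isUnit_iff_ne_zero.mpr fun h0 => hz ?_
      rw [← ker_conicResidue k t h2]
      exact RingHom.mem_ker.mpr h0
    set χ := IsLocalization.lift (S := Localization.AtPrime (conicSingularIdeal k t))
      (M := (conicSingularIdeal k t).primeCompl) hlift with hχ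
    have hχalg : ∀ z : ConicRing k t,
        χ (algebraMap (ConicRing k t) (Localization.AtPrime (conicSingularIdeal k t)) z) =
          conicResidue k t h2 z := fun z => IsLocalization.lift_eq hlift z
    have hχT : χ T = t := by
      rw [hT, hχalg]
      have halg : algebraMap k (ConicRing k t) t =
          Ideal.Quotient.mk (conicIdeal k t) (MvPolynomial.C t) := rfl
      rw [halg, conicResidue_mk]
      simp
    have hquadk : t * (χ a) ^ 2 + (χ b) ^ 2 = 0 := by
      have hc := congrArg χ hquad
      rw [map_add, map_mul, map_pow, map_pow, map_zero, hχT] at hc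
      exact hc
    have hχa : χ a ≠ 0 := by
      intro h0
      have hb0 : χ b = 0 := by
        have hbb : (χ b) ^ 2 = 0 := by rw [h0] at hquadk; linear_combination hquadk
        exact pow_eq_zero_iff two_ne_zero |>.mp hbb
      rcases hunit with h | h
      · exact (h.map χ).ne_zero h0
      · exact (h.map χ).ne_zero hb0
    exact hsq (χ b * (χ a)⁻¹) (by field_simp; linear_combination (χ b) ^ 2 * h2 - hquadk)

end
end
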